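/- Let m, ñ, n, k be positive integers, let U ∈ ℂ^{m×ñ}, and let B̃ ∈ ℂ^{ñ×n} satisfy B̃*B̃ = I_n. Then for every k-sparse z ∈ ℂᵐ one has ‖B̃* diag(U* z)‖_{2→2} ≤ μ(U) · √k · ‖z‖₂. -/

import Mathlib

open MeasureTheory ProbabilityTheory Matrix Finset

/-- The ℓ₂ norm of a complex vector. -/
noncomputable def l2norm {n : ℕ} (x : Fin n → ℂ) : ℝ := Real.sqrt (∑ i, ‖x i‖ ^ 2)

/-- The ℓ₁ norm of a complex vector. -/
noncomputable def l1norm {n : ℕ} (x : Fin n → ℂ) : ℝ := ∑ i, ‖x i‖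

/-- A vector is `s`-sparse if it has at most `s` nonzero entries. -/
def Sparse {n : ℕ} (s : ℕ) (x : Fin n → ℂ) : Prop :=
  (Finset.univ.filter fun i => x i ≠ 0).card ≤ s

/-- Best `s`-term approximation error in ℓ₁. -/
noncomputable def sigma1 {n : ℕ} (s : ℕ) (x : Fin n → ℂ) : ℝ :=
  sInf {t : ℝ | ∃ x' : Fin n → ℂ, Sparse s x' ∧ t = l1norm (x - x')}

/-- The coherence of a matrix: the largest absolute value of an entry. -/
noncomputable def coh {a b : ℕ} (M : Matrix (Fin a) (Fin b) ℂ) : ℝ :=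
  sSup {r : ℝ | ∃ i j, r = ‖M i j‖}

/-- Horizontal concatenation of two matrices. -/
def hcat {m n p : ℕ} (A : Matrix (Fin m) (Fin n) ℂ) (H : Matrix (Fin m) (Fin p) ℂ) :
    Matrix (Fin m) (Fin (n + p)) ℂ :=
  Matrix.of fun i j => Fin.addCases (fun j₁ => A i j₁) (fun j₂ => H i j₂) j

/-- The (s,k)-restricted isometry constant of Θ ∈ ℂ^{m×(n+p)}. -/
noncomputable def RIPconst (m n p s k : ℕ) (Θ : Matrix (Fin m) (Fin (n + p)) ℂ) : ℝ :=
  sInf {δ : ℝ | 0 ≤ δ ∧ ∀ (x : Fin n → ℂ) (z : Fin p → ℂ), Sparse s x → Sparse k z →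
    (1 - δ) * (l2norm x ^ 2 + l2norm z ^ 2) ≤ l2norm (Θ.mulVec (Fin.append x z)) ^ 2 ∧
    l2norm (Θ.mulVec (Fin.append x z)) ^ 2 ≤ (1 + δ) * (l2norm x ^ 2 + l2norm z ^ 2)}

/-- The spectral (ℓ₂ → ℓ₂ operator) norm of a matrix. -/
noncomputable def opNorm {a b : ℕ} (M : Matrix (Fin a) (Fin b) ℂ) : ℝ :=
  sSup {r : ℝ | ∃ x : Fin b → ℂ, l2norm x ≤ 1 ∧ r = l2norm (M.mulVec x)}

/-! Bound `opNorm` by the ℓ₂ operator norm of matrices. The C*-identity `‖Bᴴ B‖ = ‖B‖²` makes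
`B`, hence `Bᴴ`, a contraction, and `‖diag w‖` is the sup norm of `w`. Each entry of `Uᴴ z` is at
most `coh U * ‖z‖₁`, and `‖z‖₁ ≤ √k ‖z‖₂` for `k`-sparse `z` by Cauchy–Schwarz on the support. -/

open scoped Matrix.Norms.L2Operator

lemma l2norm_eq_norm_toLp {n : ℕ} (x : Fin n → ℂ) :
    l2norm x = ‖(WithLp.toLp 2 x : EuclideanSpace ℂ (Fin n))‖ :=
  (EuclideanSpace.norm_eq _).symm

lemma opNorm_le_l2_opNorm {a b : ℕ} (M : Matrix (Fin a) (Fin b) ℂ) : opNorm M ≤ ‖M‖ := by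
  refine Real.sSup_le ?_ (norm_nonneg M)
  rintro r ⟨x, hx, rfl⟩
  rw [l2norm_eq_norm_toLp] at hx ⊢
  calc ‖(WithLp.toLp 2 (M *ᵥ x) : EuclideanSpace ℂ (Fin a))‖
      ≤ ‖M‖ * ‖(WithLp.toLp 2 x : EuclideanSpace ℂ (Fin b))‖ := M.l2_opNorm_mulVec _
    _ ≤ ‖M‖ := mul_le_of_le_one_right (norm_nonneg M) hx

lemma l2_opNorm_le_one_of_conjTranspose_mul_self_eq_one {𝕜 ι κ : Type*} [RCLike 𝕜]
    [Fintype ι] [Fintype κ] [DecidableEq κ] {B : Matrix ι κ 𝕜} (hB : Bᴴ * B = 1) :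
    ‖B‖ ≤ 1 := by
  have hone : ‖(1 : Matrix κ κ 𝕜)‖ ≤ 1 := by
    rw [← Matrix.diagonal_one, l2_opNorm_diagonal]
    exact (pi_norm_le_iff_of_nonneg zero_le_one).mpr fun _ => norm_one.le
  have hsq : ‖B‖ * ‖B‖ ≤ 1 := by rwa [← l2_opNorm_conjTranspose_mul_self, hB]
  nlinarith [norm_nonneg B]

lemma l1norm_nonneg {n : ℕ} (z : Fin n → ℂ) : 0 ≤ l1norm z :=
  Finset.sum_nonneg fun i _ => norm_nonneg (z i)

lemma l1norm_le_sqrt_mul_l2norm {n k : ℕ} {z : Fin n → ℂ} (hz : Sparse k z) :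
    l1norm z ≤ Real.sqrt k * l2norm z := by
  set S := univ.filter fun i => z i ≠ 0
  have hsupp : l1norm z = ∑ i ∈ S, ‖z i‖ :=
    (Finset.sum_filter_of_ne fun i _ hi => norm_ne_zero_iff.mp hi).symm
  rw [l2norm, ← Real.sqrt_mul (Nat.cast_nonneg k), hsupp,
    Real.le_sqrt (Finset.sum_nonneg fun i _ => norm_nonneg _) (by positivity)]
  calc (∑ i ∈ S, ‖z i‖) ^ 2 ≤ #S * ∑ i ∈ S, ‖z i‖ ^ 2 := sq_sum_le_card_mul_sum_sq
    _ ≤ k * ∑ i, ‖z i‖ ^ 2 := by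
        gcongr
        · exact_mod_cast hz
        · exact Finset.subset_univ S

lemma norm_le_coh {a b : ℕ} (M : Matrix (Fin a) (Fin b) ℂ) (i : Fin a) (j : Fin b) :
    ‖M i j‖ ≤ coh M := by
  refine le_csSup ?_ ⟨i, j, rfl⟩
  refine (Set.finite_range fun p : Fin a × Fin b => ‖M p.1 p.2‖).bddAbove.mono ?_
  rintro _ ⟨i, j, rfl⟩
  exact ⟨(i, j), rfl⟩

lemma coh_nonneg {a b : ℕ} (M : Matrix (Fin a) (Fin b) ℂ) : 0 ≤ coh M :=
  Real.sSup_nonneg fun _ ⟨_, _, hr⟩ => hr ▸ norm_nonneg _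

lemma norm_conjTranspose_mulVec_apply_le {a b : ℕ} (U : Matrix (Fin a) (Fin b) ℂ)
    (z : Fin a → ℂ) (j : Fin b) : ‖(Uᴴ *ᵥ z) j‖ ≤ coh U * l1norm z := by
  rw [l1norm, Finset.mul_sum]
  calc ‖(Uᴴ *ᵥ z) j‖ ≤ ∑ i, ‖U i j‖ * ‖z i‖ := by
        refine (norm_sum_le (E := ℂ) _ _).trans_eq (Finset.sum_congr rfl fun i _ => ?_)
        simp [Matrix.conjTranspose_apply]
    _ ≤ ∑ i, coh U * ‖z i‖ := by gcongr with i; exact norm_le_coh U i j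

theorem stmt_11_general (m nt n k : ℕ)
    (U : Matrix (Fin m) (Fin nt) ℂ)
    (B : Matrix (Fin nt) (Fin n) ℂ) (hB : Bᴴ * B = 1)
    (z : Fin m → ℂ) (hz : Sparse k z) :
    opNorm (Bᴴ * Matrix.diagonal (Uᴴ.mulVec z)) ≤ coh U * Real.sqrt k * l2norm z := by
  have hdiag : ‖Matrix.diagonal (Uᴴ *ᵥ z)‖ ≤ coh U * l1norm z := by
    rw [l2_opNorm_diagonal]
    exact (pi_norm_le_iff_of_nonneg (mul_nonneg (coh_nonneg U) (l1norm_nonneg z))).mpr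
      (norm_conjTranspose_mulVec_apply_le U z)
  calc opNorm (Bᴴ * Matrix.diagonal (Uᴴ *ᵥ z))
      ≤ ‖Bᴴ‖ * ‖Matrix.diagonal (Uᴴ *ᵥ z)‖ := (opNorm_le_l2_opNorm _).trans (l2_opNorm_mul _ _)
    _ ≤ 1 * (coh U * l1norm z) := by
        rw [l2_opNorm_conjTranspose]
        gcongr
        exact l2_opNorm_le_one_of_conjTranspose_mul_self_eq_one hB
    _ ≤ coh U * (Real.sqrt k * l2norm z) := by
        rw [one_mul]
        gcongr
        · exact coh_nonneg U
        · exact l1norm_le_sqrt_mul_l2norm hz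
    _ = coh U * Real.sqrt k * l2norm z := (mul_assoc _ _ _).symm

/-- seminorm bound ‖B̃* diag(U*z)‖_{2→2} ≤ μ(U)·√k·‖z‖₂ for k-sparse z
(equation (14) of the paper). -/
theorem stmt_11 (m nt n k : ℕ) (hm : 0 < m) (hnt : 0 < nt) (hn : 0 < n) (hk : 0 < k)
    (U : Matrix (Fin m) (Fin nt) ℂ)
    (B : Matrix (Fin nt) (Fin n) ℂ) (hB : Bᴴ * B = 1)
    (z : Fin m → ℂ) (hz : Sparse k z) :
    opNorm (Bᴴ * Matrix.diagonal (Uᴴ.mulVec z)) ≤ coh U * Real.sqrt k * l2norm z :=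
  stmt_11_general m nt n k U B hB z hz
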